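/- arXiv:2002.04778 — 4 statements merged into one kernel-verified Lean document; each statement's English description precedes it below -/
import Mathlib

section
/- Let H be a finite simple graph, k a positive integer, and c : V(H) → [k] a coloring such that no two vertices of the same color are adjacent. Let (𝒮, U) be the SET-COVER instance constructed from (H, k, c) as described, and let k' = k + C(k,2). If H contains a multicolored clique of size k (a clique with exactly one vertex of each color), with vertices v_1,…,v_k where v_i has color i, then the collection {S_{v_1},…,S_{v_k}} ∪ {S_{v_i v_j} : 1 ≤ i < j ≤ k} is a set cover of 𝒮 of cardinality k'. -/
/-
The colors and the color pairs are covered by the sets `S_{v_i}` and `S_{v_i v_j}` directly. An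
ordered pair `(x, y)` of adjacent vertices is covered by `S_x` when `x` is the clique vertex
`v_{c x}`; otherwise `x` is neither `v_{c x}` nor `v_{c y}` (properness gives `c x ≠ c y`), so
`(x, y)` survives in `S_{v_{c x} v_{c y}}`. The chosen sets are pairwise distinct, as each
contains its own color or color pair, which gives the count `k + C(k,2)`.
-/

/-- The element type of the SET-COVER universe constructed from a multicolored-clique
instance: an element is a color `i ∈ [k]`, an unordered pair of colors `{i,j}`,
or an ordered pair of vertices `(u,v)`. -/
abbrev MCElt (k : ℕ) (V : Type*) := Fin k ⊕ (Sym2 (Fin k) ⊕ V × V)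

/-- The universe `U = [k] ∪ {{i,j} : i ≠ j} ∪ {(u,v) : uv ∈ E(H)}` of the constructed
SET-COVER instance (both ordered pairs are included for each edge of `H`). -/
def mcUniv {V : Type*} (H : SimpleGraph V) (k : ℕ) : Set (MCElt k V) :=
  {w | (∃ i : Fin k, w = Sum.inl i) ∨
       (∃ s : Sym2 (Fin k), ¬ s.IsDiag ∧ w = Sum.inr (Sum.inl s)) ∨
       (∃ u v : V, H.Adj u v ∧ w = Sum.inr (Sum.inr (u, v)))}

/-- The set `S_u = {c(u)} ∪ {(u,v) : v ∈ N(u)}` constructed from a vertex `u`. -/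
def mcVtxSet {V : Type*} (H : SimpleGraph V) {k : ℕ} (c : V → Fin k) (u : V) :
    Set (MCElt k V) :=
  {w | w = Sum.inl (c u) ∨ ∃ v, H.Adj u v ∧ w = Sum.inr (Sum.inr (u, v))}

/-- The set `S_{uv} = {{c(u),c(v)}} ∪ {(x,y) ∈ U_{c(u)c(v)} : x ∉ {u,v}}` constructed
from an edge `uv` of `H` (where `U_{ij}` is the set of ordered pairs of adjacent vertices
with color pair `{i,j}`). -/
def mcEdgeSet {V : Type*} (H : SimpleGraph V) {k : ℕ} (c : V → Fin k) (u v : V) :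
    Set (MCElt k V) :=
  {w | w = Sum.inr (Sum.inl s(c u, c v)) ∨
       ∃ x y, H.Adj x y ∧ s(c x, c y) = s(c u, c v) ∧ x ≠ u ∧ x ≠ v ∧
         w = Sum.inr (Sum.inr (x, y))}

/-- The collection `𝒮` of the constructed SET-COVER instance: one set `S_u` for each
vertex `u` of `H` and one set `S_{uv}` for each edge `uv` of `H`. -/
def mcColl {V : Type*} (H : SimpleGraph V) {k : ℕ} (c : V → Fin k) :
    Set (Set (MCElt k V)) :=
  {T | ∃ u, T = mcVtxSet H c u} ∪ {T | ∃ u v, H.Adj u v ∧ T = mcEdgeSet H c u v}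

section

variable {V : Type*} {H : SimpleGraph V} {k : ℕ} {c : V → Fin k}

theorem inl_mem_mcVtxSet_iff {u : V} {i : Fin k} :
    (Sum.inl i : MCElt k V) ∈ mcVtxSet H c u ↔ i = c u := by
  simp [mcVtxSet]

theorem inl_notMem_mcEdgeSet (u w : V) (i : Fin k) :
    (Sum.inl i : MCElt k V) ∉ mcEdgeSet H c u w := by
  simp [mcEdgeSet]

theorem mcVtxSet_ne_mcEdgeSet (u x y : V) : mcVtxSet H c u ≠ mcEdgeSet H c x y := fun h =>
  inl_notMem_mcEdgeSet x y (c u) (h ▸ inl_mem_mcVtxSet_iff.2 rfl)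

theorem color_eq_of_mcVtxSet_eq {u w : V} (h : mcVtxSet H c u = mcVtxSet H c w) : c u = c w :=
  inl_mem_mcVtxSet_iff.1 (h ▸ inl_mem_mcVtxSet_iff.2 rfl : Sum.inl (c u) ∈ mcVtxSet H c w)

theorem inr_inl_mem_mcEdgeSet_iff {u w : V} {s : Sym2 (Fin k)} :
    (Sum.inr (Sum.inl s) : MCElt k V) ∈ mcEdgeSet H c u w ↔ s = s(c u, c w) := by
  simp [mcEdgeSet]

theorem colorPair_eq_of_mcEdgeSet_eq {u w x y : V}
    (h : mcEdgeSet H c u w = mcEdgeSet H c x y) : s(c u, c w) = s(c x, c y) :=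
  inr_inl_mem_mcEdgeSet_iff.1 (h ▸ inr_inl_mem_mcEdgeSet_iff.2 rfl)

theorem inr_inr_mem_mcVtxSet {u w : V} (h : H.Adj u w) :
    (Sum.inr (Sum.inr (u, w)) : MCElt k V) ∈ mcVtxSet H c u :=
  Or.inr ⟨w, h, rfl⟩

theorem inr_inr_mem_mcEdgeSet {x y u w : V} (h : H.Adj x y)
    (hc : s(c x, c y) = s(c u, c w)) (hu : x ≠ u) (hw : x ≠ w) :
    (Sum.inr (Sum.inr (x, y)) : MCElt k V) ∈ mcEdgeSet H c u w :=
  Or.inr ⟨x, y, h, hc, hu, hw, rfl⟩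

theorem mcEdgeSet_comm (u w : V) : mcEdgeSet H c u w = mcEdgeSet H c w u := by
  ext; simp only [mcEdgeSet, Set.mem_ofPred_eq, Sym2.eq_swap, and_left_comm (a := _ ≠ u)]

theorem ncard_setOf_fst_lt_snd (α : Type*) [Fintype α] [LinearOrder α] :
    {p : α × α | p.1 < p.2}.ncard = (Fintype.card α).choose 2 := by
  rw [← Finset.coe_filter_univ, Set.ncard_coe_finset, Fintype.card_product_filter_lt]

section CliqueCover

variable (H c) (v : Fin k → V)

def cliqueVtxSets : Set (Set (MCElt k V)) := {T | ∃ i, T = mcVtxSet H c (v i)}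

def cliqueEdgeSets : Set (Set (MCElt k V)) :=
  {T | ∃ i j : Fin k, i < j ∧ T = mcEdgeSet H c (v i) (v j)}

variable {H c v}

theorem mcEdgeSet_mem_cliqueEdgeSets {i j : Fin k} (hij : i ≠ j) :
    mcEdgeSet H c (v i) (v j) ∈ cliqueEdgeSets H c v := by
  rcases hij.lt_or_gt with h | h
  · exact ⟨i, j, h, rfl⟩
  · exact ⟨j, i, h, mcEdgeSet_comm _ _⟩

theorem cliqueSets_subset_mcColl (hclique : ∀ i j, i ≠ j → H.Adj (v i) (v j)) :
    cliqueVtxSets H c v ∪ cliqueEdgeSets H c v ⊆ mcColl H c := by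
  rintro T (⟨i, rfl⟩ | ⟨i, j, hij, rfl⟩)
  · exact Or.inl ⟨v i, rfl⟩
  · exact Or.inr ⟨v i, v j, hclique i j hij.ne, rfl⟩

theorem mcUniv_subset_sUnion_cliqueSets (hproper : ∀ u w : V, H.Adj u w → c u ≠ c w)
    (hcol : ∀ i, c (v i) = i) :
    mcUniv H k ⊆ ⋃₀ (cliqueVtxSets H c v ∪ cliqueEdgeSets H c v) := by
  rintro _ (⟨i, rfl⟩ | ⟨s, hs, rfl⟩ | ⟨x, y, hxy, rfl⟩)
  · exact ⟨_, Or.inl ⟨i, rfl⟩, inl_mem_mcVtxSet_iff.2 (hcol i).symm⟩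
  · induction s with | h i j => ?_
    refine ⟨_, Or.inr (mcEdgeSet_mem_cliqueEdgeSets (Sym2.mk_isDiag_iff.not.1 hs)), ?_⟩
    rw [inr_inl_mem_mcEdgeSet_iff, hcol, hcol]
  · by_cases hx : x = v (c x)
    · exact ⟨_, Or.inl ⟨c x, rfl⟩, hx ▸ inr_inr_mem_mcVtxSet hxy⟩
    · have hcxy : c x ≠ c y := hproper x y hxy
      have hxv : x ≠ v (c y) := fun h => hcxy (by rw [h, hcol])
      exact ⟨_, Or.inr (mcEdgeSet_mem_cliqueEdgeSets hcxy),
        inr_inr_mem_mcEdgeSet hxy (by rw [hcol, hcol]) hx hxv⟩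

theorem cliqueVtxSets_eq_range :
    cliqueVtxSets H c v = Set.range fun i => mcVtxSet H c (v i) := by
  ext; simp [cliqueVtxSets, eq_comm]

theorem cliqueEdgeSets_eq_image : cliqueEdgeSets H c v =
    (fun p : Fin k × Fin k => mcEdgeSet H c (v p.1) (v p.2)) '' {p | p.1 < p.2} := by
  ext; simp [cliqueEdgeSets, eq_comm]

theorem ncard_cliqueVtxSets (hcol : ∀ i, c (v i) = i) :
    (cliqueVtxSets H c v).ncard = k := by
  have hinj : Function.Injective fun i => mcVtxSet H c (v i) := fun i j h => by
    simpa only [hcol] using color_eq_of_mcVtxSet_eq h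
  rw [cliqueVtxSets_eq_range, ← Set.image_univ, Set.ncard_image_of_injective _ hinj,
    Set.ncard_univ, Nat.card_fin]

theorem ncard_cliqueEdgeSets (hcol : ∀ i, c (v i) = i) :
    (cliqueEdgeSets H c v).ncard = k.choose 2 := by
  have hinj : Set.InjOn (fun p : Fin k × Fin k => mcEdgeSet H c (v p.1) (v p.2))
      {p | p.1 < p.2} := by
    rintro ⟨i, j⟩ hij ⟨i', j'⟩ hij' h
    have hs := colorPair_eq_of_mcEdgeSet_eq h
    simp only [hcol, Sym2.eq_iff] at hs
    rcases hs with ⟨rfl, rfl⟩ | ⟨rfl, rfl⟩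
    · rfl
    · exact (lt_asymm (α := Fin k) hij hij').elim
  rw [cliqueEdgeSets_eq_image, hinj.ncard_image, ncard_setOf_fst_lt_snd, Fintype.card_fin]

theorem disjoint_cliqueVtxSets_cliqueEdgeSets :
    Disjoint (cliqueVtxSets H c v) (cliqueEdgeSets H c v) :=
  Set.disjoint_left.2 fun _ ⟨_, hi⟩ ⟨_, _, _, hij⟩ => mcVtxSet_ne_mcEdgeSet _ _ _ (hi ▸ hij)

theorem ncard_cliqueSets (hcol : ∀ i, c (v i) = i) :
    (cliqueVtxSets H c v ∪ cliqueEdgeSets H c v).ncard = k + k.choose 2 := by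
  have hfinV : (cliqueVtxSets H c v).Finite := cliqueVtxSets_eq_range ▸ Set.finite_range _
  have hfinE : (cliqueEdgeSets H c v).Finite :=
    cliqueEdgeSets_eq_image ▸ (Set.toFinite _).image _
  rw [Set.ncard_union_eq disjoint_cliqueVtxSets_cliqueEdgeSets hfinV hfinE,
    ncard_cliqueVtxSets hcol, ncard_cliqueEdgeSets hcol]

end CliqueCover

end

theorem multicolored_clique_to_cover_general
    {V : Type*}
    (H : SimpleGraph V) (k : ℕ)
    (c : V → Fin k)
    (hproper : ∀ u w : V, H.Adj u w → c u ≠ c w)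
    (v : Fin k → V)
    (hcol : ∀ i, c (v i) = i)
    (hclique : ∀ i j, i ≠ j → H.Adj (v i) (v j)) :
    ({T | ∃ i, T = mcVtxSet H c (v i)} ∪
        {T | ∃ i j : Fin k, i < j ∧ T = mcEdgeSet H c (v i) (v j)}) ⊆ mcColl H c ∧
    mcUniv H k ⊆
      ⋃₀ ({T | ∃ i, T = mcVtxSet H c (v i)} ∪
        {T | ∃ i j : Fin k, i < j ∧ T = mcEdgeSet H c (v i) (v j)}) ∧
    ({T | ∃ i, T = mcVtxSet H c (v i)} ∪
        {T | ∃ i j : Fin k, i < j ∧ T = mcEdgeSet H c (v i) (v j)}).ncard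
      = k + k.choose 2 :=
  ⟨cliqueSets_subset_mcColl hclique, mcUniv_subset_sUnion_cliqueSets hproper hcol,
    ncard_cliqueSets hcol⟩

/-- forward direction in the proof of Lemma 6 of the paper: let `H` be
a finite simple graph, `k > 0`, and `c` a proper coloring of `H` with colors `Fin k`.
If `H` has a multicolored clique `v₁, …, v_k` (with `c(vᵢ) = i`), then the collection
`{S_{v₁}, …, S_{v_k}} ∪ {S_{vᵢvⱼ} : i < j}` is a set cover of the constructed instance
of cardinality exactly `k' = k + C(k,2)`. -/
theorem multicolored_clique_to_cover
    {V : Type*} [Fintype V] [DecidableEq V]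
    (H : SimpleGraph V) (k : ℕ) (hk : 0 < k)
    (c : V → Fin k)
    (hproper : ∀ u w : V, H.Adj u w → c u ≠ c w)
    (v : Fin k → V)
    (hcol : ∀ i, c (v i) = i)
    (hclique : ∀ i j, i ≠ j → H.Adj (v i) (v j)) :
    ({T | ∃ i, T = mcVtxSet H c (v i)} ∪
        {T | ∃ i j : Fin k, i < j ∧ T = mcEdgeSet H c (v i) (v j)}) ⊆ mcColl H c ∧
    mcUniv H k ⊆
      ⋃₀ ({T | ∃ i, T = mcVtxSet H c (v i)} ∪
        {T | ∃ i j : Fin k, i < j ∧ T = mcEdgeSet H c (v i) (v j)}) ∧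
    ({T | ∃ i, T = mcVtxSet H c (v i)} ∪
        {T | ∃ i j : Fin k, i < j ∧ T = mcEdgeSet H c (v i) (v j)}).ncard
      = k + k.choose 2 :=
  multicolored_clique_to_cover_general H k c hproper v hcol hclique
end

section
/- Let c_1, c_2 : Σ → ℕ be two CNPs over a finite alphabet Σ and let n* = Σ_{x ∈ Σ} min(c_1(x), c_2(x)). Then for all strings S_1, S_2 over Σ with cnp(S_1) = c_1 and cnp(S_2) = c_2, the number of common adjacencies satisfies a(S_1, S_2) ≤ n*. -/
/-- The copy-number profile of a string: the number of occurrences of each character. -/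
def cnp {α : Type*} [DecidableEq α] (S : List α) : α → ℕ := fun x => S.count x

/-- The adjacency multiset of a string: the multiset of unordered pairs
`{S[i], S[i+1]}` over all consecutive positions of `S`. -/
def adjMultiset {α : Type*} : List α → Multiset (Sym2 α)
  | [] => 0
  | [_] => 0
  | a :: b :: rest => s(a, b) ::ₘ adjMultiset (b :: rest)

/-- The number of common adjacencies `a(S₁, S₂)` between two strings: the cardinality of
the multiset intersection of their adjacency multisets. -/
def numAdj {α : Type*} [DecidableEq α] (S₁ S₂ : List α) : ℕ :=
  Multiset.card (adjMultiset S₁ ∩ adjMultiset S₂)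

/-!
Every adjacency has two endpoints, and a position of a string is an endpoint of at most two
of its adjacencies. So the endpoints of a multiset `M` of common adjacencies, counted with
multiplicity, form a multiset of size `2 |M|` containing each character `x` at most
`2 min(c₁ x, c₂ x)` times; summing over `x` gives `2 |M| ≤ 2 n*`.
-/

theorem Sym2.toMultiset_mk {α : Type*} (a b : α) : s(a, b).toMultiset = {a, b} := rfl

namespace Multiset

variable {α β : Type*}

theorem bind_mono_left {s t : Multiset α} (f : α → Multiset β) (h : s ≤ t) :
    s.bind f ≤ t.bind f := by
  obtain ⟨u, rfl⟩ := le_iff_exists_add.mp h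
  rw [add_bind]
  exact le_add_right _ _

theorem card_bind_toMultiset (M : Multiset (Sym2 α)) :
    card (M.bind Sym2.toMultiset) = 2 * card M := by
  simp [card_bind, Sym2.card_toMultiset, mul_comm]

theorem add_self_inter_add_self [DecidableEq α] (s t : Multiset α) :
    (s + s) ∩ (t + t) = s ∩ t + s ∩ t := by
  ext x
  simp only [count_inter, count_add]
  omega

theorem card_inter_eq_sum_min [Fintype α] [DecidableEq α] (s t : Multiset α) :
    card (s ∩ t) = ∑ x : α, min (s.count x) (t.count x) := by
  simp [← count_inter]

end Multiset

open Multiset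

theorem cons_bind_toMultiset_adjMultiset_le {α : Type*} (a : α) (l : List α) :
    a ::ₘ (adjMultiset (a :: l)).bind Sym2.toMultiset ≤ (a :: l : Multiset α) + (a :: l) := by
  induction l generalizing a with
  | nil => simp [adjMultiset]
  | cons b l ih =>
    calc a ::ₘ (adjMultiset (a :: b :: l)).bind Sym2.toMultiset
        = a ::ₘ a ::ₘ b ::ₘ (adjMultiset (b :: l)).bind Sym2.toMultiset := by
          simp [adjMultiset, Sym2.toMultiset_mk]
      _ ≤ a ::ₘ a ::ₘ ((b :: l : Multiset α) + (b :: l)) := cons_le_cons a (cons_le_cons a (ih b))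
      _ = (a :: b :: l : Multiset α) + (a :: b :: l) := by
          simp only [← cons_coe, cons_add, add_cons, cons_swap b a]

theorem bind_toMultiset_adjMultiset_le {α : Type*} (S : List α) :
    (adjMultiset S).bind Sym2.toMultiset ≤ (S : Multiset α) + S := by
  cases S with
  | nil => simp [adjMultiset]
  | cons a l => exact (le_cons_self _ a).trans (cons_bind_toMultiset_adjMultiset_le a l)

/-- upper bound in Theorem 4 of the paper: for CNPs `c₁, c₂` over a
finite alphabet `α` and `n* = Σ_x min(c₁(x), c₂(x))`, every pair of strings `S₁, S₂` with
`cnp(S₁) = c₁` and `cnp(S₂) = c₂` has at most `n*` common adjacencies. -/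
theorem numAdj_le_nstar
    {α : Type*} [Fintype α] [DecidableEq α] (c₁ c₂ : α → ℕ) :
    ∀ S₁ S₂ : List α, cnp S₁ = c₁ → cnp S₂ = c₂ →
      numAdj S₁ S₂ ≤ ∑ x : α, min (c₁ x) (c₂ x) := by
  rintro S₁ S₂ rfl rfl
  set M := adjMultiset S₁ ∩ adjMultiset S₂
  have hM : M.bind Sym2.toMultiset ≤ ((S₁ : Multiset α) + S₁) ∩ ((S₂ : Multiset α) + S₂) :=
    le_inter ((bind_mono_left _ inter_le_left).trans (bind_toMultiset_adjMultiset_le S₁))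
      ((bind_mono_left _ inter_le_right).trans (bind_toMultiset_adjMultiset_le S₂))
  have hcard : 2 * card M ≤ 2 * card ((S₁ : Multiset α) ∩ S₂) := by
    simpa only [card_bind_toMultiset, add_self_inter_add_self, card_add, two_mul]
      using card_le_card hM
  rw [card_inter_eq_sum_min (S₁ : Multiset α)] at hcard
  simpa only [numAdj, cnp, coe_count] using Nat.le_of_mul_le_mul_left hcard two_pos
end

section
/- Let c_1, c_2 : Σ → ℕ be two CNPs over a finite alphabet Σ and let n* = Σ_{x ∈ Σ} min(c_1(x), c_2(x)). If n* ≥ 1, then there exist strings S_1, S_2 over Σ with cnp(S_1) = c_1, cnp(S_2) = c_2, and a(S_1, S_2) ≥ n* − 1. -/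
lemma cnp_append {α : Type*} [DecidableEq α] (L M : List α) : cnp (L ++ M) = cnp L + cnp M := by
  funext x
  exact List.count_append ..

lemma exists_cnp_eq {α : Type*} [Fintype α] [DecidableEq α] (f : α → ℕ) :
    ∃ L : List α, cnp L = f ∧ L.length = ∑ x, f x := by
  refine ⟨(∑ x, Multiset.replicate (f x) x).toList, ?_, ?_⟩
  · funext x
    rw [cnp, ← Multiset.coe_count, Multiset.coe_toList, Multiset.count_sum']
    simp [Multiset.count_replicate]
  · simp [Multiset.card_sum]

lemma adjMultiset_cons_cons {α : Type*} (a b : α) (L : List α) :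
    adjMultiset (a :: b :: L) = s(a, b) ::ₘ adjMultiset (b :: L) := rfl

lemma card_adjMultiset {α : Type*} (L : List α) :
    Multiset.card (adjMultiset L) = L.length - 1 := by
  induction L with
  | nil => rfl
  | cons a L ih =>
    cases L with
    | nil => rfl
    | cons b L => simp [adjMultiset_cons_cons, ih]

lemma adjMultiset_le_append {α : Type*} (L R : List α) :
    adjMultiset L ≤ adjMultiset (L ++ R) := by
  induction L with
  | nil => exact Multiset.zero_le _
  | cons a L ih =>
    cases L with
    | nil => exact Multiset.zero_le _
    | cons b L => exact Multiset.cons_le_cons _ ih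

lemma length_sub_one_le_numAdj_append {α : Type*} [DecidableEq α] (L R₁ R₂ : List α) :
    L.length - 1 ≤ numAdj (L ++ R₁) (L ++ R₂) := by
  rw [← card_adjMultiset]
  exact Multiset.card_le_card (le_inf (adjMultiset_le_append L R₁) (adjMultiset_le_append L R₂))

theorem exists_strings_numAdj_ge_nstar_sub_one_general
    {α : Type*} [Fintype α] [DecidableEq α] (c₁ c₂ : α → ℕ) :
    ∃ S₁ S₂ : List α, cnp S₁ = c₁ ∧ cnp S₂ = c₂ ∧
      (∑ x : α, min (c₁ x) (c₂ x)) - 1 ≤ numAdj S₁ S₂ := by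
  obtain ⟨L, hL, hlen⟩ := exists_cnp_eq fun x => min (c₁ x) (c₂ x)
  obtain ⟨R₁, hR₁, -⟩ := exists_cnp_eq fun x => c₁ x - min (c₁ x) (c₂ x)
  obtain ⟨R₂, hR₂, -⟩ := exists_cnp_eq fun x => c₂ x - min (c₁ x) (c₂ x)
  refine ⟨L ++ R₁, L ++ R₂, ?_, ?_, hlen ▸ length_sub_one_le_numAdj_append L R₁ R₂⟩
  · funext x
    simp [cnp_append, hL, hR₁]
  · funext x
    simp [cnp_append, hL, hR₂]

/-- achievability of `n* − 1` in Theorem 4 of the paper: for CNPs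
`c₁, c₂` over a finite alphabet `α` with `n* = Σ_x min(c₁(x), c₂(x)) ≥ 1`, there exist
strings `S₁, S₂` with `cnp(S₁) = c₁`, `cnp(S₂) = c₂`, and at least `n* − 1` common
adjacencies. -/
theorem exists_strings_numAdj_ge_nstar_sub_one
    {α : Type*} [Fintype α] [DecidableEq α] (c₁ c₂ : α → ℕ)
    (hn : 1 ≤ ∑ x : α, min (c₁ x) (c₂ x)) :
    ∃ S₁ S₂ : List α, cnp S₁ = c₁ ∧ cnp S₂ = c₂ ∧
      (∑ x : α, min (c₁ x) (c₂ x)) - 1 ≤ numAdj S₁ S₂ :=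
  exists_strings_numAdj_ge_nstar_sub_one_general c₁ c₂
end

section
/- Let c_1, c_2 : Σ → ℕ be two CNPs over a finite alphabet Σ and let n* = Σ_{x ∈ Σ} min(c_1(x), c_2(x)), with n* ≥ 1. Then the maximum of a(S_1, S_2) over all strings S_1, S_2 with cnp(S_1) = c_1 and cnp(S_2) = c_2 equals n* if there exist distinct characters x, y ∈ Σ with min(c_1(x), c_2(x)) ≥ 1, min(c_1(y), c_2(y)) ≥ 1, c_1(x) > c_2(x), and c_2(y) > c_1(y); and it equals n* − 1 otherwise. -/
/-! Counting each common adjacency at both of its letters, and each occurrence of a letter in at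
most two adjacencies of a string, bounds `a(S₁, S₂)` by `n*`. When no letter is in excess in
`S₁` while another one is in excess in `S₂`, say `c₂ ≤ c₁` on the common letters, every common
adjacency is an adjacency of `S₂` between occurrences of letters of `S₁`; there are `n*` such
occurrences in the path `S₂`, so fewer than `n*` such adjacencies. Both bounds are attained by
placing a string `T` with profile `min c₁ c₂` in both strings; if `T` starts with a letter `x`
in excess in `S₁` and ends with a letter `y` in excess in `S₂`, then `S₁ = T x …` and
`S₂ = y T …` share the additional adjacency `{y, x}`. -/

namespace CNP

variable {α : Type*}

section Adjacency

@[simp] lemma adjMultiset_cons_cons (a b : α) (t : List α) :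
    adjMultiset (a :: b :: t) = s(a, b) ::ₘ adjMultiset (b :: t) := rfl

lemma card_adjMultiset (S : List α) : Multiset.card (adjMultiset S) = S.length - 1 := by
  induction S with
  | nil => rfl
  | cons a t ih => cases t with
    | nil => rfl
    | cons b t => simp [ih]

lemma adjMultiset_le_append (S T : List α) : adjMultiset S ≤ adjMultiset (S ++ T) := by
  induction S with
  | nil => exact Multiset.zero_le _
  | cons a t ih => cases t with
    | nil => exact Multiset.zero_le _
    | cons b t => simpa using Multiset.cons_le_cons s(a, b) ih

lemma adjMultiset_append_pair (S : List α) (a b : α) :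
    adjMultiset (S ++ [a, b]) = s(a, b) ::ₘ adjMultiset (S ++ [a]) := by
  induction S with
  | nil => rfl
  | cons c t ih => cases t with
    | nil => exact Multiset.cons_swap _ _ _
    | cons d t =>
      simp only [List.cons_append] at ih ⊢
      rw [adjMultiset_cons_cons, ih, adjMultiset_cons_cons, Multiset.cons_swap]

lemma mem_of_mem_adjMultiset {S : List α} {p : Sym2 α} (hp : p ∈ adjMultiset S) {z : α}
    (hz : z ∈ p) : z ∈ S := by
  induction S with
  | nil => simp [adjMultiset] at hp
  | cons a t ih => cases t with
    | nil => simp [adjMultiset] at hp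
    | cons b t =>
      rcases Multiset.mem_cons.mp hp with rfl | hp
      · rcases Sym2.mem_iff.mp hz with rfl | rfl <;> simp
      · exact List.mem_cons_of_mem a (ih hp)

lemma card_bind_toMultiset (M : Multiset (Sym2 α)) :
    Multiset.card (M.bind Sym2.toMultiset) = 2 * Multiset.card M := by
  simp [Multiset.card_bind, Sym2.card_toMultiset, mul_comm]

lemma bind_toMultiset_mono {M N : Multiset (Sym2 α)} (h : M ≤ N) :
    M.bind Sym2.toMultiset ≤ N.bind Sym2.toMultiset := by
  obtain ⟨K, rfl⟩ := Multiset.le_iff_exists_add.mp h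
  simp [Multiset.add_bind]

lemma bind_toMultiset_adjMultiset_cons_le (a : α) (t : List α) :
    (adjMultiset (a :: t)).bind Sym2.toMultiset ≤ a ::ₘ (↑t + ↑t) := by
  induction t generalizing a with
  | nil => exact Multiset.zero_le _
  | cons b t ih =>
    have : (s(a, b)).toMultiset = a ::ₘ b ::ₘ 0 := rfl
    rw [adjMultiset_cons_cons, Multiset.cons_bind, this, Multiset.cons_add, Multiset.cons_add,
      zero_add]
    refine (Multiset.cons_le_cons a (Multiset.cons_le_cons b (ih b))).trans_eq ?_
    rw [← Multiset.cons_coe, Multiset.cons_add, Multiset.add_cons]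

lemma bind_toMultiset_adjMultiset_le (S : List α) :
    (adjMultiset S).bind Sym2.toMultiset ≤ ↑S + ↑S := by
  cases S with
  | nil => exact Multiset.zero_le _
  | cons a t =>
    refine (bind_toMultiset_adjMultiset_cons_le a t).trans ?_
    rw [← Multiset.cons_coe, Multiset.cons_add]
    exact Multiset.cons_le_cons a (by gcongr; exact Multiset.le_cons_self _ _)

end Adjacency

variable [DecidableEq α]

section Bounds

/-- The adjacencies of a string with both letters in `s` form a linear forest on the
occurrences of letters of `s`, hence there are fewer of them than such occurrences. -/
lemma card_filter_adjMultiset_le (s : Finset α) (S : List α) :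
    Multiset.card ((adjMultiset S).filter (· ∈ s.sym2)) ≤ S.countP (· ∈ s) - 1 := by
  induction S with
  | nil => simp [adjMultiset]
  | cons a t ih => cases t with
    | nil => simp [adjMultiset]
    | cons b t =>
      rw [adjMultiset_cons_cons, List.countP_cons (l := b :: t)]
      by_cases hab : s(a, b) ∈ s.sym2
      · obtain ⟨ha, hb⟩ := Finset.mk_mem_sym2_iff.mp hab
        have hb_pos : 0 < (b :: t).countP (· ∈ s) :=
          List.countP_pos_iff.mpr ⟨b, List.mem_cons_self, by simpa⟩
        simp only [Multiset.filter_cons, hab, ha, decide_true, if_true, Multiset.singleton_add,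
          Multiset.card_cons]
        omega
      · simp only [Multiset.filter_cons, hab, if_false, zero_add]
        split_ifs <;> omega

lemma numAdj_comm (S₁ S₂ : List α) : numAdj S₁ S₂ = numAdj S₂ S₁ := by
  rw [numAdj, numAdj, Multiset.inter_comm]

lemma card_le_numAdj {N : Multiset (Sym2 α)} {S₁ S₂ : List α} (h₁ : N ≤ adjMultiset S₁)
    (h₂ : N ≤ adjMultiset S₂) : Multiset.card N ≤ numAdj S₁ S₂ :=
  Multiset.card_le_card (le_inf h₁ h₂)

lemma numAdj_le_countP_mem_toFinset_sub_one (S₁ S₂ : List α) :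
    numAdj S₁ S₂ ≤ S₂.countP (· ∈ S₁.toFinset) - 1 := by
  refine le_trans (Multiset.card_le_card ?_) (card_filter_adjMultiset_le S₁.toFinset S₂)
  refine Multiset.le_filter.mpr ⟨Multiset.inter_le_right, fun p hp => ?_⟩
  exact Finset.mem_sym2_iff.mpr fun z hz =>
    List.mem_toFinset.mpr (mem_of_mem_adjMultiset (Multiset.mem_inter.mp hp).1 hz)

variable [Fintype α]

lemma numAdj_le_sum_min (S₁ S₂ : List α) :
    numAdj S₁ S₂ ≤ ∑ z : α, min (cnp S₁ z) (cnp S₂ z) := by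
  set E := (adjMultiset S₁ ∩ adjMultiset S₂).bind Sym2.toMultiset
  have hE : ∀ S : List α, adjMultiset S₁ ∩ adjMultiset S₂ ≤ adjMultiset S →
      ∀ z, E.count z ≤ 2 * cnp S z := fun S hS z => by
    simpa [two_mul, E, cnp] using Multiset.count_le_of_le z
      ((bind_toMultiset_mono hS).trans (bind_toMultiset_adjMultiset_le S))
  have := calc
    2 * numAdj S₁ S₂ = ∑ z : α, E.count z := by
      rw [Multiset.sum_count_eq_card fun z _ => Finset.mem_univ z, card_bind_toMultiset, numAdj]
    _ ≤ ∑ z : α, 2 * min (cnp S₁ z) (cnp S₂ z) := Finset.sum_le_sum fun z _ => by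
      have := hE S₁ Multiset.inter_le_left z
      have := hE S₂ Multiset.inter_le_right z
      omega
  rw [← Finset.mul_sum] at this
  omega

lemma countP_mem_eq_sum (s : Finset α) (S : List α) :
    S.countP (· ∈ s) = ∑ z : α, if z ∈ s then cnp S z else 0 := by
  rw [← Multiset.coe_countP, Multiset.countP_eq_card_filter,
    ← Multiset.sum_count_eq_card fun z _ => Finset.mem_univ z]
  simp only [Multiset.count_filter, Multiset.coe_count, cnp]

lemma numAdj_le_sum_min_sub_one {S₁ S₂ : List α}
    (h : ∀ z, 1 ≤ min (cnp S₁ z) (cnp S₂ z) → cnp S₂ z ≤ cnp S₁ z) :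
    numAdj S₁ S₂ ≤ ∑ z : α, min (cnp S₁ z) (cnp S₂ z) - 1 := by
  refine (numAdj_le_countP_mem_toFinset_sub_one S₁ S₂).trans_eq ?_
  rw [countP_mem_eq_sum]
  congr 1
  refine Finset.sum_congr rfl fun z _ => ?_
  have := h z
  simp only [List.mem_toFinset, ← List.count_pos_iff, cnp] at this ⊢
  split_ifs <;> omega

end Bounds

section Realization

lemma cnp_append (S T : List α) : cnp (S ++ T) = cnp S + cnp T :=
  funext fun _ => List.count_append ..

lemma cnp_singleton (a : α) : cnp [a] = Pi.single a 1 :=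
  funext fun z => by
    rcases eq_or_ne z a with rfl | h
    · simp [cnp]
    · simp [cnp, h, h.symm]

variable [Fintype α]

lemma length_eq_sum_cnp (S : List α) : S.length = ∑ z : α, cnp S z := by
  rw [← Multiset.coe_card, ← Multiset.sum_count_eq_card fun z _ => Finset.mem_univ z]
  simp only [Multiset.coe_count, cnp]

lemma exists_cnp_eq (c : α → ℕ) : ∃ S : List α, cnp S = c := by
  refine ⟨(∑ z : α, Multiset.replicate (c z) z).toList, funext fun z => ?_⟩
  rw [cnp, ← Multiset.coe_count, Multiset.coe_toList, Multiset.count_sum']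
  simp [Multiset.count_replicate]

lemma exists_cnp_append_eq {S : List α} {c : α → ℕ} (h : cnp S ≤ c) :
    ∃ R : List α, cnp (S ++ R) = c := by
  obtain ⟨R, hR⟩ := exists_cnp_eq (c - cnp S)
  exact ⟨R, by rw [cnp_append, hR, add_tsub_cancel_of_le h]⟩

lemma exists_sum_min_sub_one_le_numAdj (c₁ c₂ : α → ℕ) :
    ∃ S₁ S₂ : List α, cnp S₁ = c₁ ∧ cnp S₂ = c₂ ∧
      ∑ z : α, min (c₁ z) (c₂ z) - 1 ≤ numAdj S₁ S₂ := by
  obtain ⟨L, hL⟩ := exists_cnp_eq (c₁ ⊓ c₂)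
  obtain ⟨R₁, hR₁⟩ := exists_cnp_append_eq (hL ▸ inf_le_left : cnp L ≤ c₁)
  obtain ⟨R₂, hR₂⟩ := exists_cnp_append_eq (hL ▸ inf_le_right : cnp L ≤ c₂)
  refine ⟨_, _, hR₁, hR₂, ?_⟩
  calc ∑ z : α, min (c₁ z) (c₂ z) - 1 = Multiset.card (adjMultiset L) := by
        rw [card_adjMultiset, length_eq_sum_cnp, hL]; rfl
    _ ≤ numAdj (L ++ R₁) (L ++ R₂) :=
        card_le_numAdj (adjMultiset_le_append L R₁) (adjMultiset_le_append L R₂)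

lemma exists_sum_min_le_numAdj {c₁ c₂ : α → ℕ} {x y : α} (hxy : x ≠ y)
    (hx : 1 ≤ min (c₁ x) (c₂ x)) (hy : 1 ≤ min (c₁ y) (c₂ y))
    (hx' : c₂ x < c₁ x) (hy' : c₁ y < c₂ y) :
    ∃ S₁ S₂ : List α, cnp S₁ = c₁ ∧ cnp S₂ = c₂ ∧
      ∑ z : α, min (c₁ z) (c₂ z) ≤ numAdj S₁ S₂ := by
  have hxy_le : Pi.single x 1 + Pi.single y 1 ≤ c₁ ⊓ c₂ := fun z => by
    simp only [Pi.add_apply, Pi.single_apply, Pi.inf_apply]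
    split_ifs <;> simp_all
  obtain ⟨L, hL⟩ := exists_cnp_eq (c₁ ⊓ c₂ - (Pi.single x 1 + Pi.single y 1))
  set T := (x :: L) ++ [y]
  have hT : cnp T = c₁ ⊓ c₂ := by
    rw [cnp_append, ← List.singleton_append, cnp_append, cnp_singleton, cnp_singleton, hL,
      add_comm (Pi.single x 1), add_assoc, tsub_add_cancel_of_le hxy_le]
  have hT₁ : cnp (T ++ [x]) ≤ c₁ := fun z => by
    simp only [cnp_append, cnp_singleton, hT, Pi.add_apply, Pi.single_apply, Pi.inf_apply]
    split_ifs <;> simp_all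
  have hT₂ : cnp ([y] ++ T) ≤ c₂ := fun z => by
    simp only [cnp_append, cnp_singleton, hT, Pi.add_apply, Pi.single_apply, Pi.inf_apply]
    split_ifs <;> simp_all
    omega
  obtain ⟨R₁, hR₁⟩ := exists_cnp_append_eq hT₁
  obtain ⟨R₂, hR₂⟩ := exists_cnp_append_eq hT₂
  refine ⟨_, _, hR₁, hR₂, ?_⟩
  have h₁ : adjMultiset (T ++ [x]) = s(y, x) ::ₘ adjMultiset T := by
    simpa [T] using adjMultiset_append_pair (x :: L) y x
  have h₂ : adjMultiset ([y] ++ T) = s(y, x) ::ₘ adjMultiset T := rfl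
  calc ∑ z : α, min (c₁ z) (c₂ z) = Multiset.card (s(y, x) ::ₘ adjMultiset T) := by
        rw [Multiset.card_cons, card_adjMultiset, Nat.sub_add_cancel (by simp [T]),
          length_eq_sum_cnp, hT]
        rfl
    _ ≤ numAdj (T ++ [x] ++ R₁) ([y] ++ T ++ R₂) :=
        card_le_numAdj (h₁ ▸ adjMultiset_le_append _ R₁) (h₂ ▸ adjMultiset_le_append _ R₂)

end Realization

lemma isGreatest_numAdj_of_le {c₁ c₂ : α → ℕ} {n : ℕ}
    (hle : ∀ S₁ S₂ : List α, cnp S₁ = c₁ → cnp S₂ = c₂ → numAdj S₁ S₂ ≤ n)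
    (hex : ∃ S₁ S₂ : List α, cnp S₁ = c₁ ∧ cnp S₂ = c₂ ∧ n ≤ numAdj S₁ S₂) :
    IsGreatest {m : ℕ | ∃ S₁ S₂ : List α, cnp S₁ = c₁ ∧ cnp S₂ = c₂ ∧ numAdj S₁ S₂ = m} n := by
  obtain ⟨S₁, S₂, h₁, h₂, hn⟩ := hex
  refine ⟨⟨S₁, S₂, h₁, h₂, (hle S₁ S₂ h₁ h₂).antisymm hn⟩, ?_⟩
  rintro _ ⟨S₁, S₂, h₁, h₂, rfl⟩
  exact hle S₁ S₂ h₁ h₂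

end CNP

open CNP in
theorem isGreatest_numAdj_general
    {α : Type*} [Fintype α] [DecidableEq α] (c₁ c₂ : α → ℕ) :
    ((∃ x y : α, x ≠ y ∧ 1 ≤ min (c₁ x) (c₂ x) ∧ 1 ≤ min (c₁ y) (c₂ y) ∧
        c₂ x < c₁ x ∧ c₁ y < c₂ y) →
      IsGreatest {m : ℕ | ∃ S₁ S₂ : List α, cnp S₁ = c₁ ∧ cnp S₂ = c₂ ∧ numAdj S₁ S₂ = m}
        (∑ z : α, min (c₁ z) (c₂ z))) ∧
    (¬ (∃ x y : α, x ≠ y ∧ 1 ≤ min (c₁ x) (c₂ x) ∧ 1 ≤ min (c₁ y) (c₂ y) ∧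
        c₂ x < c₁ x ∧ c₁ y < c₂ y) →
      IsGreatest {m : ℕ | ∃ S₁ S₂ : List α, cnp S₁ = c₁ ∧ cnp S₂ = c₂ ∧ numAdj S₁ S₂ = m}
        ((∑ z : α, min (c₁ z) (c₂ z)) - 1)) := by
  refine ⟨fun ⟨x, y, hxy, hx, hy, hx', hy'⟩ => ?_, fun hnot => ?_⟩
  · refine isGreatest_numAdj_of_le ?_ (exists_sum_min_le_numAdj hxy hx hy hx' hy')
    rintro S₁ S₂ rfl rfl
    exact numAdj_le_sum_min S₁ S₂
  · refine isGreatest_numAdj_of_le ?_ (exists_sum_min_sub_one_le_numAdj c₁ c₂)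
    rintro S₁ S₂ rfl rfl
    have hcomparable : (∀ z, 1 ≤ min (cnp S₁ z) (cnp S₂ z) → cnp S₂ z ≤ cnp S₁ z) ∨
        (∀ z, 1 ≤ min (cnp S₂ z) (cnp S₁ z) → cnp S₁ z ≤ cnp S₂ z) := by
      by_contra! ⟨⟨y, hy, hy'⟩, ⟨x, hx, hx'⟩⟩
      exact hnot ⟨x, y, by rintro rfl; omega, by omega, by omega, hx', hy'⟩
    rcases hcomparable with h | h
    · exact numAdj_le_sum_min_sub_one h
    · simpa only [numAdj_comm S₁, min_comm] using numAdj_le_sum_min_sub_one h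

/-- Theorem 4 of the paper, optimality of Algorithm 1: for CNPs
`c₁, c₂` over a finite alphabet `α` with `n* = Σ_z min(c₁(z), c₂(z)) ≥ 1`, the maximum
number of common adjacencies `a(S₁, S₂)` over all strings `S₁, S₂` with `cnp(S₁) = c₁`
and `cnp(S₂) = c₂` equals `n*` if there are distinct characters `x, y` with
`min(c₁(x), c₂(x)) ≥ 1`, `min(c₁(y), c₂(y)) ≥ 1`, `c₁(x) > c₂(x)` and `c₂(y) > c₁(y)`,
and equals `n* − 1` otherwise. -/
theorem isGreatest_numAdj
    {α : Type*} [Fintype α] [DecidableEq α] (c₁ c₂ : α → ℕ)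
    (hn : 1 ≤ ∑ z : α, min (c₁ z) (c₂ z)) :
    ((∃ x y : α, x ≠ y ∧ 1 ≤ min (c₁ x) (c₂ x) ∧ 1 ≤ min (c₁ y) (c₂ y) ∧
        c₂ x < c₁ x ∧ c₁ y < c₂ y) →
      IsGreatest {m : ℕ | ∃ S₁ S₂ : List α, cnp S₁ = c₁ ∧ cnp S₂ = c₂ ∧ numAdj S₁ S₂ = m}
        (∑ z : α, min (c₁ z) (c₂ z))) ∧
    (¬ (∃ x y : α, x ≠ y ∧ 1 ≤ min (c₁ x) (c₂ x) ∧ 1 ≤ min (c₁ y) (c₂ y) ∧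
        c₂ x < c₁ x ∧ c₁ y < c₂ y) →
      IsGreatest {m : ℕ | ∃ S₁ S₂ : List α, cnp S₁ = c₁ ∧ cnp S₂ = c₂ ∧ numAdj S₁ S₂ = m}
        ((∑ z : α, min (c₁ z) (c₂ z)) - 1)) :=
  isGreatest_numAdj_general c₁ c₂
end
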